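/- arXiv:2503.08908 — 3 statements merged into one kernel-verified Lean document; each statement's English description precedes it below -/
import Mathlib

section
/- Consider a one-layer Transformer T acting on sequences of vectors in R^d, where the i-th output is T(S)_i = ψ(z_i) + z_i with z_i = Σ_{j≤i} α_{i,j} v_j + v_i, the attention weights α_{i,j} ≥ 0 summing to 1 over j ≤ i and satisfying α_{i,j} ≤ exp(δ)/i, and ψ Lipschitz with constant L_ψ. Let S_n be the sequence (v_1,...,v_k, v, v, ..., v) with n copies of v, all vectors of norm at most r, and let S* = (v). Then ‖T(S_n)_{n+k} − T(S*)_1‖ ≤ (L_ψ + 1)·2rk·exp(δ)/(n+k), so the representation of the last token of S_n converges to the representation of the single token of S* as n → ∞. -/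
/-- One-layer Transformer (attention with residual, then Lipschitz MLP `ψ` with
residual): the last-token representation of the sequence `(v₁,…,v_k, v,…,v)`
(`n` copies of `v`) is within `(Lψ + 1)·2·r·k·exp δ / (n + k)` of the
representation `ψ (2•v) + 2•v` of the singleton sequence `(v)`, hence converges
to it as `n → ∞`. -/
theorem stmt_2 (d k : ℕ) (r δ Lψ : ℝ) (hLψ : 0 ≤ Lψ)
    (ψ : EuclideanSpace ℝ (Fin d) → EuclideanSpace ℝ (Fin d))
    (hψ : ∀ x y, ‖ψ x - ψ y‖ ≤ Lψ * ‖x - y‖)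
    (v : ℕ → EuclideanSpace ℝ (Fin d)) (vrep : EuclideanSpace ℝ (Fin d))
    (hv : ∀ j ∈ Finset.range k, ‖v j‖ ≤ r) (hvrep : ‖vrep‖ ≤ r)
    (α : ℕ → ℕ → ℝ)  -- `α n j` : attention weight of the last position on position `j`
    (hα0 : ∀ n : ℕ, ∀ j ∈ Finset.range (n + k), 0 ≤ α n j)
    (hαsum : ∀ n : ℕ, 1 ≤ n → ∑ j ∈ Finset.range (n + k), α n j = 1)
    (hαb : ∀ n : ℕ, ∀ j ∈ Finset.range (n + k), α n j ≤ Real.exp δ / (n + k)) :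
    (∀ n : ℕ, 1 ≤ n →
      ‖(ψ ((∑ j ∈ Finset.range k, α n j • v j) +
            (∑ j ∈ Finset.Ico k (n + k), α n j • vrep) + vrep) +
          ((∑ j ∈ Finset.range k, α n j • v j) +
            (∑ j ∈ Finset.Ico k (n + k), α n j • vrep) + vrep)) -
        (ψ ((2 : ℝ) • vrep) + (2 : ℝ) • vrep)‖ ≤
        (Lψ + 1) * (2 * r * k * Real.exp δ) / (n + k)) ∧
    Filter.Tendsto (fun n : ℕ =>
      ‖(ψ ((∑ j ∈ Finset.range k, α n j • v j) +
            (∑ j ∈ Finset.Ico k (n + k), α n j • vrep) + vrep) +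
          ((∑ j ∈ Finset.range k, α n j • v j) +
            (∑ j ∈ Finset.Ico k (n + k), α n j • vrep) + vrep)) -
        (ψ ((2 : ℝ) • vrep) + (2 : ℝ) • vrep)‖) Filter.atTop (nhds 0) := by
  have hr : (0:ℝ) ≤ r := le_trans (norm_nonneg _) hvrep
  -- main bound
  have main : ∀ n : ℕ, 1 ≤ n →
      ‖(ψ ((∑ j ∈ Finset.range k, α n j • v j) +
            (∑ j ∈ Finset.Ico k (n + k), α n j • vrep) + vrep) +
          ((∑ j ∈ Finset.range k, α n j • v j) +
            (∑ j ∈ Finset.Ico k (n + k), α n j • vrep) + vrep)) -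
        (ψ ((2 : ℝ) • vrep) + (2 : ℝ) • vrep)‖ ≤
        (Lψ + 1) * (2 * r * k * Real.exp δ) / (n + k) := by
    intro n hn
    set z : EuclideanSpace ℝ (Fin d) :=
      (∑ j ∈ Finset.range k, α n j • v j) +
        (∑ j ∈ Finset.Ico k (n + k), α n j • vrep) + vrep with hz
    have hsplit : ∑ j ∈ Finset.range k, α n j + ∑ j ∈ Finset.Ico k (n + k), α n j = 1 := by
      rw [Finset.sum_range_add_sum_Ico _ (by omega : k ≤ n + k)]
      exact hαsum n hn
    have hzz : z - (2:ℝ) • vrep = ∑ j ∈ Finset.range k, α n j • (v j - vrep) := by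
      have : (∑ j ∈ Finset.Ico k (n + k), α n j • vrep)
          = (1 - ∑ j ∈ Finset.range k, α n j) • vrep := by
        rw [← Finset.sum_smul]; congr 1; linarith
      rw [hz, this]
      simp [Finset.sum_smul, smul_sub, Finset.sum_sub_distrib, sub_smul, two_smul]
      abel
    have hkey : ‖z - (2:ℝ) • vrep‖ ≤ 2 * r * k * Real.exp δ / (n + k) := by
      rw [hzz]
      calc ‖∑ j ∈ Finset.range k, α n j • (v j - vrep)‖
          ≤ ∑ j ∈ Finset.range k, ‖α n j • (v j - vrep)‖ := norm_sum_le _ _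
        _ ≤ ∑ j ∈ Finset.range k, Real.exp δ / (n + k) * (2 * r) := by
            apply Finset.sum_le_sum
            intro j hj
            have hj' : j ∈ Finset.range (n + k) := by
              simp only [Finset.mem_range] at hj ⊢; omega
            rw [norm_smul, Real.norm_eq_abs, abs_of_nonneg (hα0 n j hj')]
            have h1 : ‖v j - vrep‖ ≤ 2 * r := by
              calc ‖v j - vrep‖ ≤ ‖v j‖ + ‖vrep‖ := norm_sub_le _ _
                _ ≤ 2 * r := by have := hv j hj; linarith
            have h2 : (0:ℝ) ≤ Real.exp δ / (n + k) := by positivity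
            exact mul_le_mul (hαb n j hj') h1 (norm_nonneg _) h2
        _ = 2 * r * k * Real.exp δ / (n + k) := by
            rw [Finset.sum_const, Finset.card_range, nsmul_eq_mul]; ring
    have hnk : (0:ℝ) < (n:ℝ) + k := by positivity
    calc ‖(ψ z + z) - (ψ ((2:ℝ) • vrep) + (2:ℝ) • vrep)‖
        = ‖(ψ z - ψ ((2:ℝ) • vrep)) + (z - (2:ℝ) • vrep)‖ := by congr 1; abel
      _ ≤ ‖ψ z - ψ ((2:ℝ) • vrep)‖ + ‖z - (2:ℝ) • vrep‖ := norm_add_le _ _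
      _ ≤ Lψ * ‖z - (2:ℝ) • vrep‖ + ‖z - (2:ℝ) • vrep‖ := by
          have := hψ z ((2:ℝ) • vrep); linarith
      _ = (Lψ + 1) * ‖z - (2:ℝ) • vrep‖ := by ring
      _ ≤ (Lψ + 1) * (2 * r * k * Real.exp δ / (n + k)) := by
          apply mul_le_mul_of_nonneg_left hkey; linarith
      _ = (Lψ + 1) * (2 * r * k * Real.exp δ) / (n + k) := by ring
  refine ⟨main, ?_⟩
  have hbound : Filter.Tendsto (fun n : ℕ =>
      (Lψ + 1) * (2 * r * k * Real.exp δ) / (n + k)) Filter.atTop (nhds 0) := by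
    apply Filter.Tendsto.div_atTop tendsto_const_nhds
    exact Filter.tendsto_atTop_add_const_right _ _ tendsto_natCast_atTop_atTop
  apply squeeze_zero' (Filter.Eventually.of_forall fun n => norm_nonneg _) _ hbound
  filter_upwards [Filter.eventually_ge_atTop 1] with n hn
  exact main n hn
end

section
/- Let S_n = (v_1,...,v_k, v,...,v) with n repetitions and S'_m = (v_1,...,v_k, v,...,v) with m repetitions, both under the one-layer Transformer with dispersion bound α_{i,j} ≤ exp(δ)/i, Lipschitz MLP ψ (constant L_ψ), and token norms at most r. Then ‖T(S_n)_{n+k} − T(S'_m)_{m+k}‖ ≤ (L_ψ+1)·2rk·exp(δ)·(1/(n+k) + 1/(m+k)); in particular the last-token representations of two repeated sequences of different lengths become arbitrarily close as n, m → ∞. -/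
/-!
Since the attention weights sum to one, the weight carried by the repeated token is
`1 - ∑_{j<k} α j`, so the attention output equals `vrep + ∑_{j<k} α j • (v j - vrep)` plus the
residual `vrep`. The two outputs therefore differ by `∑_{j<k} (α j - β j) • (v j - vrep)`, and the
dispersion bound makes each coefficient at most `exp δ / (n + k) + exp δ / (m + k)`. The residual
MLP block `x ↦ ψ x + x` is `(Lψ + 1)`-Lipschitz, which gives the claim.
-/

open Finset

theorem norm_residual_sub_residual_le {E : Type*} [SeminormedAddCommGroup E] {L : ℝ}
    (ψ : E → E) (hψ : ∀ x y, ‖ψ x - ψ y‖ ≤ L * ‖x - y‖) (x y : E) :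
    ‖(ψ x + x) - (ψ y + y)‖ ≤ (L + 1) * ‖x - y‖ :=
  calc ‖(ψ x + x) - (ψ y + y)‖ = ‖(ψ x - ψ y) + (x - y)‖ := by congr 1; abel
    _ ≤ ‖ψ x - ψ y‖ + ‖x - y‖ := norm_add_le _ _
    _ ≤ (L + 1) * ‖x - y‖ := by linarith [hψ x y]

section RepeatedToken

variable {R E : Type*} [Ring R] [AddCommGroup E] [Module R E]

theorem sum_range_smul_add_sum_Ico_smul_eq {α : ℕ → R} {k N : ℕ} (hkN : k ≤ N)
    (hα : ∑ j ∈ range N, α j = 1) (v : ℕ → E) (w : E) :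
    ∑ j ∈ range k, α j • v j + ∑ j ∈ Ico k N, α j • w = w + ∑ j ∈ range k, α j • (v j - w) := by
  have htail : ∑ j ∈ Ico k N, α j = 1 - ∑ j ∈ range k, α j := by
    rw [← hα, ← sum_range_add_sum_Ico α hkN, add_sub_cancel_left]
  simp only [← sum_smul, htail, smul_sub, sum_sub_distrib, sub_smul, one_smul]
  abel

theorem repeated_attention_sub_eq {α β : ℕ → R} {k N M : ℕ} (hkN : k ≤ N) (hkM : k ≤ M)
    (hα : ∑ j ∈ range N, α j = 1) (hβ : ∑ j ∈ range M, β j = 1) (v : ℕ → E) (w : E) :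
    (∑ j ∈ range k, α j • v j + ∑ j ∈ Ico k N, α j • w + w) -
        (∑ j ∈ range k, β j • v j + ∑ j ∈ Ico k M, β j • w + w) =
      ∑ j ∈ range k, (α j - β j) • (v j - w) := by
  rw [sum_range_smul_add_sum_Ico_smul_eq hkN hα, sum_range_smul_add_sum_Ico_smul_eq hkM hβ]
  simp only [sub_smul, sum_sub_distrib]
  abel

end RepeatedToken

theorem abs_sub_le_add_of_nonneg_of_le {x y a b : ℝ} (hx0 : 0 ≤ x) (hxa : x ≤ a)
    (hy0 : 0 ≤ y) (hyb : y ≤ b) : |x - y| ≤ a + b :=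
  abs_sub_le_of_nonneg_of_le hx0 (le_add_of_le_of_nonneg hxa (hy0.trans hyb)) hy0
    (le_add_of_nonneg_of_le (hx0.trans hxa) hyb)

theorem norm_sum_range_sub_smul_sub_le {E : Type*} [SeminormedAddCommGroup E] [NormedSpace ℝ E]
    {k : ℕ} {α β : ℕ → ℝ} {a b r : ℝ} {v : ℕ → E} {w : E}
    (hα0 : ∀ j ∈ range k, 0 ≤ α j) (hαa : ∀ j ∈ range k, α j ≤ a)
    (hβ0 : ∀ j ∈ range k, 0 ≤ β j) (hβb : ∀ j ∈ range k, β j ≤ b)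
    (hv : ∀ j ∈ range k, ‖v j‖ ≤ r) (hw : ‖w‖ ≤ r) :
    ‖∑ j ∈ range k, (α j - β j) • (v j - w)‖ ≤ k * ((a + b) * (2 * r)) := by
  have hterm : ∀ j ∈ range k, ‖(α j - β j) • (v j - w)‖ ≤ (a + b) * (2 * r) := by
    intro j hj
    have hcoef := abs_sub_le_add_of_nonneg_of_le (hα0 j hj) (hαa j hj) (hβ0 j hj) (hβb j hj)
    have hdiff : ‖v j - w‖ ≤ 2 * r := by linarith [norm_sub_le (v j) w, hv j hj]
    rw [norm_smul, Real.norm_eq_abs]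
    exact mul_le_mul hcoef hdiff (norm_nonneg _) ((abs_nonneg _).trans hcoef)
  simpa using norm_sum_le_of_le (range k) hterm

theorem stmt_11_general (d k n m : ℕ)
    (r δ Lψ : ℝ) (hLψ : 0 ≤ Lψ)
    (ψ : EuclideanSpace ℝ (Fin d) → EuclideanSpace ℝ (Fin d))
    (hψ : ∀ x y, ‖ψ x - ψ y‖ ≤ Lψ * ‖x - y‖)
    (v : ℕ → EuclideanSpace ℝ (Fin d)) (vrep : EuclideanSpace ℝ (Fin d))
    (hv : ∀ j ∈ Finset.range k, ‖v j‖ ≤ r) (hvrep : ‖vrep‖ ≤ r)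
    (α β : ℕ → ℝ)
    (hα0 : ∀ j ∈ Finset.range (n + k), 0 ≤ α j)
    (hαsum : ∑ j ∈ Finset.range (n + k), α j = 1)
    (hαb : ∀ j ∈ Finset.range (n + k), α j ≤ Real.exp δ / (n + k))
    (hβ0 : ∀ j ∈ Finset.range (m + k), 0 ≤ β j)
    (hβsum : ∑ j ∈ Finset.range (m + k), β j = 1)
    (hβb : ∀ j ∈ Finset.range (m + k), β j ≤ Real.exp δ / (m + k)) :
    ‖(ψ ((∑ j ∈ Finset.range k, α j • v j) +
          (∑ j ∈ Finset.Ico k (n + k), α j • vrep) + vrep) +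
        ((∑ j ∈ Finset.range k, α j • v j) +
          (∑ j ∈ Finset.Ico k (n + k), α j • vrep) + vrep)) -
      (ψ ((∑ j ∈ Finset.range k, β j • v j) +
          (∑ j ∈ Finset.Ico k (m + k), β j • vrep) + vrep) +
        ((∑ j ∈ Finset.range k, β j • v j) +
          (∑ j ∈ Finset.Ico k (m + k), β j • vrep) + vrep))‖ ≤
      (Lψ + 1) * (2 * r * k * Real.exp δ) * (1 / (n + k) + 1 / (m + k)) := by
  have hkn : range k ⊆ range (n + k) := range_subset_range.2 (Nat.le_add_left k n)
  have hkm : range k ⊆ range (m + k) := range_subset_range.2 (Nat.le_add_left k m)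
  calc _ ≤ (Lψ + 1) * ‖(∑ j ∈ range k, α j • v j + ∑ j ∈ Ico k (n + k), α j • vrep + vrep) -
          (∑ j ∈ range k, β j • v j + ∑ j ∈ Ico k (m + k), β j • vrep + vrep)‖ :=
        norm_residual_sub_residual_le ψ hψ _ _
    _ ≤ (Lψ + 1) * (k * ((Real.exp δ / (n + k) + Real.exp δ / (m + k)) * (2 * r))) := by
        rw [repeated_attention_sub_eq (Nat.le_add_left k n) (Nat.le_add_left k m) hαsum hβsum]
        gcongr
        exact norm_sum_range_sub_smul_sub_le (fun j hj => hα0 j (hkn hj))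
          (fun j hj => hαb j (hkn hj)) (fun j hj => hβ0 j (hkm hj)) (fun j hj => hβb j (hkm hj))
          hv hvrep
    _ = (Lψ + 1) * (2 * r * k * Real.exp δ) * (1 / (n + k) + 1 / (m + k)) := by ring

/-- Last-token representations of two repeated sequences with the same prefix and
repeated token but different repetition counts `n`, `m` are within
`(Lψ+1)·2·r·k·exp δ·(1/(n+k) + 1/(m+k))` of each other. -/
theorem stmt_11 (d k n m : ℕ) (hn : 1 ≤ n) (hm : 1 ≤ m)
    (r δ Lψ : ℝ) (hLψ : 0 ≤ Lψ)
    (ψ : EuclideanSpace ℝ (Fin d) → EuclideanSpace ℝ (Fin d))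
    (hψ : ∀ x y, ‖ψ x - ψ y‖ ≤ Lψ * ‖x - y‖)
    (v : ℕ → EuclideanSpace ℝ (Fin d)) (vrep : EuclideanSpace ℝ (Fin d))
    (hv : ∀ j ∈ Finset.range k, ‖v j‖ ≤ r) (hvrep : ‖vrep‖ ≤ r)
    (α β : ℕ → ℝ)
    (hα0 : ∀ j ∈ Finset.range (n + k), 0 ≤ α j)
    (hαsum : ∑ j ∈ Finset.range (n + k), α j = 1)
    (hαb : ∀ j ∈ Finset.range (n + k), α j ≤ Real.exp δ / (n + k))
    (hβ0 : ∀ j ∈ Finset.range (m + k), 0 ≤ β j)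
    (hβsum : ∑ j ∈ Finset.range (m + k), β j = 1)
    (hβb : ∀ j ∈ Finset.range (m + k), β j ≤ Real.exp δ / (m + k)) :
    ‖(ψ ((∑ j ∈ Finset.range k, α j • v j) +
          (∑ j ∈ Finset.Ico k (n + k), α j • vrep) + vrep) +
        ((∑ j ∈ Finset.range k, α j • v j) +
          (∑ j ∈ Finset.Ico k (n + k), α j • vrep) + vrep)) -
      (ψ ((∑ j ∈ Finset.range k, β j • v j) +
          (∑ j ∈ Finset.Ico k (m + k), β j • vrep) + vrep) +
        ((∑ j ∈ Finset.range k, β j • v j) +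
          (∑ j ∈ Finset.Ico k (m + k), β j • vrep) + vrep))‖ ≤
      (Lψ + 1) * (2 * r * k * Real.exp δ) * (1 / (n + k) + 1 / (m + k)) :=
  stmt_11_general d k n m r δ Lψ hLψ ψ hψ v vrep hv hvrep α β hα0 hαsum hαb hβ0 hβsum hβb
end

section
/- Let α_{i,j} (1 ≤ j ≤ i) be causal softmax attention weights over a sequence of length n+k, satisfying α_{i,j} ≤ exp(δ)/i for the last position i = n+k. For any assignment of value vectors where the last n positions all carry the same vector v and the first k carry v_1,...,v_k with all norms at most r, the attention output a = Σ_j α_{n+k,j} v_j satisfies ‖a − v‖ ≤ 2rk·exp(δ)/(n+k) and ‖a‖ ≤ r. -/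
/-!
Since the weights sum to one, the output minus `vrep` only sees the first `k` positions:
`a - vrep = ∑_{j<k} α j • (v j - vrep)`. Each of these `k` weights is at most `exp δ / (n + k)`
and each `‖v j - vrep‖ ≤ 2r`, which gives the first bound. The second is the triangle inequality
for a convex combination of vectors in the closed ball of radius `r`.
-/

open Finset

theorem sum_range_smul_add_sum_Ico_smul_sub {R M : Type*} [Ring R] [AddCommGroup M] [Module R M]
    {k m : ℕ} (hkm : k ≤ m) {w : ℕ → R}
    (hw : ∑ j ∈ range m, w j = 1) (x : ℕ → M) (y : M) :
    (∑ j ∈ range k, w j • x j) + (∑ j ∈ Ico k m, w j • y) - y =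
      ∑ j ∈ range k, w j • (x j - y) := by
  have hIco : ∑ j ∈ Ico k m, w j = 1 - ∑ j ∈ range k, w j := by
    rw [← hw, ← sum_range_add_sum_Ico w hkm, add_sub_cancel_left]
  rw [← sum_smul, hIco, sub_smul, one_smul]
  simp only [smul_sub, sum_sub_distrib, ← sum_smul]
  abel

theorem norm_sum_smul_le_sum_mul {ι E : Type*} [NormedAddCommGroup E] [NormedSpace ℝ E]
    {s : Finset ι} {w : ι → ℝ} {x : ι → E} {r : ℝ}
    (hw : ∀ i ∈ s, 0 ≤ w i) (hx : ∀ i ∈ s, ‖x i‖ ≤ r) :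
    ‖∑ i ∈ s, w i • x i‖ ≤ (∑ i ∈ s, w i) * r := by
  rw [sum_mul]
  refine norm_sum_le_of_le s fun i hi => ?_
  rw [norm_smul, Real.norm_of_nonneg (hw i hi)]
  exact mul_le_mul_of_nonneg_left (hx i hi) (hw i hi)

theorem stmt_15_general (d k n : ℕ) (r δ : ℝ)
    (v : ℕ → EuclideanSpace ℝ (Fin d)) (vrep : EuclideanSpace ℝ (Fin d))
    (α : ℕ → ℝ)
    (hv : ∀ j ∈ Finset.range k, ‖v j‖ ≤ r) (hvrep : ‖vrep‖ ≤ r)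
    (hα0 : ∀ j ∈ Finset.range (n + k), 0 ≤ α j)
    (hαsum : ∑ j ∈ Finset.range (n + k), α j = 1)
    (hαb : ∀ j ∈ Finset.range (n + k), α j ≤ Real.exp δ / (n + k)) :
    ‖(∑ j ∈ Finset.range k, α j • v j) +
        (∑ j ∈ Finset.Ico k (n + k), α j • vrep) - vrep‖ ≤
        2 * r * k * Real.exp δ / (n + k) ∧
      ‖(∑ j ∈ Finset.range k, α j • v j) +
        (∑ j ∈ Finset.Ico k (n + k), α j • vrep)‖ ≤ r := by
  have hk : k ≤ n + k := Nat.le_add_left k n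
  have hprefix : ∀ j ∈ range k, j ∈ range (n + k) := fun j hj =>
    mem_range.2 ((mem_range.1 hj).trans_le hk)
  have hsuffix : ∀ j ∈ Ico k (n + k), j ∈ range (n + k) := fun j hj =>
    mem_range.2 (mem_Ico.1 hj).2
  have hleak : ∑ j ∈ range k, α j ≤ k * (Real.exp δ / (n + k)) := by
    simpa using sum_le_card_nsmul _ _ _ fun j hj => hαb j (hprefix j hj)
  have hdiff : ∀ j ∈ range k, ‖v j - vrep‖ ≤ 2 * r := fun j hj => by
    linarith [norm_sub_le (v j) vrep, hv j hj]
  constructor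
  · rw [sum_range_smul_add_sum_Ico_smul_sub hk hαsum]
    calc _ ≤ (∑ j ∈ range k, α j) * (2 * r) :=
          norm_sum_smul_le_sum_mul (fun j hj => hα0 j (hprefix j hj)) hdiff
      _ ≤ k * (Real.exp δ / (n + k)) * (2 * r) :=
          mul_le_mul_of_nonneg_right hleak (by linarith [norm_nonneg vrep])
      _ = 2 * r * k * Real.exp δ / (n + k) := by ring
  · calc _ ≤ (∑ j ∈ range k, α j) * r + (∑ j ∈ Ico k (n + k), α j) * r :=
          norm_add_le_of_le
            (norm_sum_smul_le_sum_mul (fun j hj => hα0 j (hprefix j hj)) hv)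
            (norm_sum_smul_le_sum_mul (fun j hj => hα0 j (hsuffix j hj)) fun _ _ => hvrep)
      _ = r := by rw [← add_mul, sum_range_add_sum_Ico α hk, hαsum, one_mul]

/-- The attention output at the last position of a long repeated sequence is a
convex combination of vectors of norm at most `r` (hence has norm at most `r`)
and is within `2·r·k·exp δ/(n+k)` of the repeated token's value vector. -/
theorem stmt_15 (d k n : ℕ) (hn : 1 ≤ n) (r δ : ℝ)
    (v : ℕ → EuclideanSpace ℝ (Fin d)) (vrep : EuclideanSpace ℝ (Fin d))
    (α : ℕ → ℝ)
    (hv : ∀ j ∈ Finset.range k, ‖v j‖ ≤ r) (hvrep : ‖vrep‖ ≤ r)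
    (hα0 : ∀ j ∈ Finset.range (n + k), 0 ≤ α j)
    (hαsum : ∑ j ∈ Finset.range (n + k), α j = 1)
    (hαb : ∀ j ∈ Finset.range (n + k), α j ≤ Real.exp δ / (n + k)) :
    ‖(∑ j ∈ Finset.range k, α j • v j) +
        (∑ j ∈ Finset.Ico k (n + k), α j • vrep) - vrep‖ ≤
        2 * r * k * Real.exp δ / (n + k) ∧
      ‖(∑ j ∈ Finset.range k, α j • v j) +
        (∑ j ∈ Finset.Ico k (n + k), α j • vrep)‖ ≤ r :=
  stmt_15_general d k n r δ v vrep α hv hvrep hα0 hαsum hαb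
end
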